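/- arXiv:1805.03437 — 8 statements merged into one kernel-verified Lean document; each statement's English description precedes it below -/
import Mathlib

section
/- There exists a lexicographically optimal (LexOpt) schedule of n jobs with processing times p_1,…,p_n > 0 on m identical machines whose machine completion times C_1,…,C_m satisfy: (1) C_i ≥ C_{i+1} for every i ∈ {1,…,m−1}, and (2) for every i ∈ {1,…,m}, both Σ_{q=1}^{i−1} C_q + (m−i+1)·C_i ≥ Σ_{j=1}^n p_j and i·C_i + Σ_{q=i+1}^m C_q ≤ Σ_{j=1}^n p_j. -/
open Finset

/-- Completion time (load) of machine `i` under schedule `σ` and processing times `p`. -/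
noncomputable def mLoad {n m : ℕ} (p : Fin n → ℝ) (σ : Fin n → Fin m) (i : Fin m) : ℝ :=
  ∑ j ∈ Finset.univ.filter (fun j => σ j = i), p j

/-- Makespan of schedule `σ`: the maximum machine completion time. -/
noncomputable def makespan {n m : ℕ} (p : Fin n → ℝ) (σ : Fin n → Fin m) : ℝ :=
  ⨆ i, mLoad p σ i

/-- Minimum makespan of the jobs with processing times `p` on `m` machines. -/
noncomputable def optMakespan {n : ℕ} (m : ℕ) (p : Fin n → ℝ) : ℝ :=
  ⨅ σ : Fin n → Fin m, makespan p σ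

/-- The completion-time vector sorted in non-increasing order. -/
noncomputable def sortedDesc {m : ℕ} (C : Fin m → ℝ) : Fin m → ℝ :=
  fun i => C (Tuple.sort C i.rev)

/-- A schedule is LexOpt if its non-increasingly sorted completion-time vector is
lexicographically at most that of every other schedule. -/
def IsLexOpt {n m : ℕ} (p : Fin n → ℝ) (σ : Fin n → Fin m) : Prop :=
  ∀ σ' : Fin n → Fin m, toLex (sortedDesc (mLoad p σ)) ≤ toLex (sortedDesc (mLoad p σ'))

/-
Among the finitely many schedules pick one whose sorted load vector is lexicographically least.
Renaming its machines so that they appear in order of non-increasing load keeps the sorted load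
vector, hence LexOpt-ness, and makes the loads antitone. Both bounds then hold for every antitone
vector with total `∑ j, p j`: the `m - i` loads from `i` on are at most `C i`, and the `i + 1`
loads up to `i` are at least `C i`.
-/

section Antitone

variable {m : ℕ} {C : Fin m → ℝ}

theorem Antitone.sum_le_sum_lt_add_mul (hC : Antitone C) (i : Fin m) :
    ∑ q, C q ≤ ∑ q ∈ univ.filter (fun q => q < i), C q + ((m : ℝ) - (i : ℕ)) * C i := by
  have hIci : ∑ q ∈ Ici i, C q ≤ ((m : ℝ) - (i : ℕ)) * C i := by
    have h := sum_le_card_nsmul (Ici i) C (C i) fun q hq => hC (mem_Ici.mp hq)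
    rwa [Fin.card_Ici, nsmul_eq_mul, Nat.cast_sub i.isLt.le] at h
  rw [← sum_filter_add_sum_filter_not univ (· < i),
    show univ.filter (fun q => ¬q < i) = Ici i by ext; simp]
  linarith

theorem Antitone.mul_add_sum_gt_le_sum (hC : Antitone C) (i : Fin m) :
    ((i : ℕ) + 1 : ℝ) * C i + ∑ q ∈ univ.filter (fun q => i < q), C q ≤ ∑ q, C q := by
  have hIic : ((i : ℕ) + 1 : ℝ) * C i ≤ ∑ q ∈ Iic i, C q := by
    have h := card_nsmul_le_sum (Iic i) C (C i) fun q hq => hC (mem_Iic.mp hq)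
    rwa [Fin.card_Iic, nsmul_eq_mul, Nat.cast_add_one] at h
  rw [← sum_filter_add_sum_filter_not univ (i < ·),
    show univ.filter (fun q => ¬i < q) = Iic i by ext; simp]
  linarith

end Antitone

theorem sortedDesc_comp_perm {m : ℕ} (C : Fin m → ℝ) (τ : Equiv.Perm (Fin m)) :
    sortedDesc (C ∘ τ) = sortedDesc C :=
  funext fun i => congrFun (Tuple.comp_perm_comp_sort_eq_comp_sort (f := C) (σ := τ)) i.rev

theorem sortedDesc_eq_comp_perm {m : ℕ} (C : Fin m → ℝ) :
    sortedDesc C = C ∘ (Fin.revPerm.trans (Tuple.sort C)) :=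
  rfl

theorem antitone_sortedDesc {m : ℕ} (C : Fin m → ℝ) : Antitone (sortedDesc C) :=
  fun _ _ hab => Tuple.monotone_sort C (Fin.rev_le_rev.mpr hab)

section Schedule

variable {n m : ℕ} (p : Fin n → ℝ)

theorem sum_mLoad (σ : Fin n → Fin m) : ∑ i, mLoad p σ i = ∑ j, p j :=
  sum_fiberwise univ σ p

theorem mLoad_perm_symm_comp (σ : Fin n → Fin m) (τ : Equiv.Perm (Fin m)) :
    mLoad p (τ.symm ∘ σ) = mLoad p σ ∘ τ := by
  funext i
  simp only [mLoad, Function.comp_apply, Equiv.symm_apply_eq]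

theorem IsLexOpt.perm_symm_comp {σ : Fin n → Fin m} (hσ : IsLexOpt p σ)
    (τ : Equiv.Perm (Fin m)) :
    IsLexOpt p (τ.symm ∘ σ) := by
  intro σ'
  rw [mLoad_perm_symm_comp, sortedDesc_comp_perm]
  exact hσ σ'

theorem exists_isLexOpt (hm : 0 < m) : ∃ σ : Fin n → Fin m, IsLexOpt p σ :=
  have : Nonempty (Fin n → Fin m) := ⟨fun _ => ⟨0, hm⟩⟩
  Finite.exists_min fun σ : Fin n → Fin m => toLex (sortedDesc (mLoad p σ))

theorem exists_isLexOpt_antitone (hm : 0 < m) :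
    ∃ σ : Fin n → Fin m, IsLexOpt p σ ∧ Antitone (mLoad p σ) := by
  obtain ⟨σ, hσ⟩ := exists_isLexOpt p hm
  refine ⟨(Fin.revPerm.trans (Tuple.sort (mLoad p σ))).symm ∘ σ, hσ.perm_symm_comp p _, ?_⟩
  rw [mLoad_perm_symm_comp, ← sortedDesc_eq_comp_perm]
  exact antitone_sortedDesc _

end Schedule

theorem stmt0_general (n m : ℕ) (hm : 0 < m) (p : Fin n → ℝ) :
    ∃ σ : Fin n → Fin m, IsLexOpt p σ ∧ Antitone (mLoad p σ) ∧
      (∀ i : Fin m,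
        (∑ q ∈ Finset.univ.filter (fun q => q < i), mLoad p σ q)
            + ((m : ℝ) - (i : ℕ)) * mLoad p σ i ≥ ∑ j, p j ∧
        ((i : ℕ) + 1 : ℝ) * mLoad p σ i
            + ∑ q ∈ Finset.univ.filter (fun q => i < q), mLoad p σ q ≤ ∑ j, p j) := by
  obtain ⟨σ, hlex, hanti⟩ := exists_isLexOpt_antitone p hm
  refine ⟨σ, hlex, hanti, fun i => ⟨?_, ?_⟩⟩
  · rw [ge_iff_le, ← sum_mLoad p σ]
    exact hanti.sum_le_sum_lt_add_mul i
  · rw [← sum_mLoad p σ]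
    exact hanti.mul_add_sum_gt_le_sum i

/-- There exists a LexOpt schedule whose machine completion times are
non-increasing in the machine index and satisfy the stated lower/upper bound inequalities. -/
theorem stmt0 (n m : ℕ) (hm : 0 < m) (p : Fin n → ℝ) (hp : ∀ j, 0 < p j) :
    ∃ σ : Fin n → Fin m, IsLexOpt p σ ∧ Antitone (mLoad p σ) ∧
      (∀ i : Fin m,
        (∑ q ∈ Finset.univ.filter (fun q => q < i), mLoad p σ q)
            + ((m : ℝ) - (i : ℕ)) * mLoad p σ i ≥ ∑ j, p j ∧
        ((i : ℕ) + 1 : ℝ) * mLoad p σ i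
            + ∑ q ∈ Finset.univ.filter (fun q => i < q), mLoad p σ q ≤ ∑ j, p j) :=
  stmt0_general n m hm p
end

section
/- Let S be a LexOpt schedule of jobs with processing times p_1,…,p_n > 0 on m identical machines. For every subset M' of the machines with |M'| = m', letting J' be the set of jobs that S assigns to machines in M', the restriction of S to M' is a minimum-makespan schedule of J' on m' machines; that is, max_{i ∈ M'} C_i(S) = C*_max(m', J'). -/
/-!
Let `L` be the largest load of `S` on `M'`. A schedule of the jobs of `M'` on `|M'|` machines with
makespan below `L`, run on the machines of `M'` with the other machines untouched, lowers every
load on `M'` below `L` and keeps all other loads. Counting, for each threshold `t`, the loads that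
reach `t`: the counts agree for `t > L` and strictly drop at `t = L`, so the new sorted load vector
is lexicographically smaller, contradicting LexOpt. Conversely `S` restricted to `M'` has
makespan `L`.
-/

open Finset

/-- Minimum makespan of the job subset `J` on `m'` machines. -/
noncomputable def optMakespanOn {n : ℕ} (m' : ℕ) (p : Fin n → ℝ) (J : Finset (Fin n)) : ℝ :=
  ⨅ τ : Fin n → Fin m', ⨆ i : Fin m', ∑ j ∈ J.filter (fun j => τ j = i), p j

section SortedThresholds

variable {m : ℕ}

theorem sortedDesc_antitone (C : Fin m → ℝ) : Antitone (sortedDesc C) :=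
  fun _ _ hab => Tuple.monotone_sort C (Fin.rev_le_rev.2 hab)

theorem card_filter_le_sortedDesc (C : Fin m → ℝ) (t : ℝ) :
    #{i | t ≤ sortedDesc C i} = #{i | t ≤ C i} :=
  card_equiv (Fin.revPerm.trans (Tuple.sort C)) fun i => by
    simp only [mem_filter]
    simp [sortedDesc]

theorem le_of_card_filter_le {u v : Fin m → ℝ} (hu : Antitone u) (hv : Antitone v) {j : Fin m}
    (h : #{i | v j ≤ v i} ≤ #{i | v j ≤ u i}) : v j ≤ u j :=
  (Tuple.lt_card_ge_iff_apply_ge_of_antitone hu).1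
    (((Tuple.lt_card_ge_iff_apply_ge_of_antitone hv).2 le_rfl).trans_le h)

theorem toLex_lt_of_card_filter_le {u v : Fin m → ℝ} (hu : Antitone u) (hv : Antitone v)
    {L : ℝ}
    (habove : ∀ t, L < t → #{i | t ≤ u i} = #{i | t ≤ v i})
    (hL : #{i | L ≤ u i} < #{i | L ≤ v i}) : toLex u < toLex v := by
  have hk : #{i | L ≤ u i} < m := hL.trans_le ((card_filter_le _ _).trans_eq (card_fin m))
  set k : Fin m := ⟨_, hk⟩
  have hLu : ∀ j, L ≤ u j ↔ j < k := fun _ =>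
    (Tuple.lt_card_ge_iff_apply_ge_of_antitone hu).symm
  have hLv : ∀ j ≤ k, L ≤ v j := fun j hj =>
    (Tuple.lt_card_ge_iff_apply_ge_of_antitone hv).1 (lt_of_le_of_lt hj hL)
  refine ⟨k, fun j hj => ?_,
    (not_le.1 fun h => lt_irrefl k ((hLu k).1 h)).trans_le (hLv k le_rfl)⟩
  show u j = v j
  have huj := (hLu j).2 hj
  have hvj := hLv j hj.le
  apply le_antisymm
  · rcases huj.lt_or_eq with h | h
    · exact le_of_card_filter_le hv hu (habove _ h).le
    · exact h ▸ hvj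
  · rcases hvj.lt_or_eq with h | h
    · exact le_of_card_filter_le hu hv (habove _ h).ge
    · exact h ▸ huj

theorem toLex_sortedDesc_lt_of_lt_max {C C' : Fin m → ℝ} {s : Finset (Fin m)} {i₀ : Fin m}
    (hi₀ : i₀ ∈ s) (hmax : ∀ i ∈ s, C i ≤ C i₀) (hlt : ∀ i ∈ s, C' i < C i₀)
    (heq : ∀ i ∉ s, C' i = C i) : toLex (sortedDesc C') < toLex (sortedDesc C) := by
  refine toLex_lt_of_card_filter_le (sortedDesc_antitone C') (sortedDesc_antitone C) (L := C i₀)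
    (fun t ht => ?_) ?_ <;> simp only [card_filter_le_sortedDesc]
  · refine congrArg card (filter_congr fun i _ => ?_)
    by_cases hi : i ∈ s
    · exact iff_of_false ((hlt i hi).trans ht).not_ge ((hmax i hi).trans_lt ht).not_ge
    · rw [heq i hi]
  · refine card_lt_card ((ssubset_iff_of_subset fun i => ?_).2 ⟨i₀, ?_, ?_⟩)
    · simp only [mem_filter, mem_univ, true_and]
      by_cases hi : i ∈ s
      · exact fun h => absurd h (hlt i hi).not_ge
      · exact (heq i hi).symm ▸ id
    · simp
    · simpa using hlt i₀ hi₀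

end SortedThresholds

section Reassign

variable {n m : ℕ} (p : Fin n → ℝ) (σ : Fin n → Fin m) (s : Finset (Fin m))

noncomputable def reassignOn (τ : Fin n → Fin #s) : Fin n → Fin m :=
  fun j => if σ j ∈ s then s.equivFin.symm (τ j) else σ j

/-- `d` is a junk value: the jobs off `s` are never counted. -/
noncomputable def restrictTo (d : Fin #s) : Fin n → Fin #s :=
  fun j => if h : σ j ∈ s then s.equivFin ⟨σ j, h⟩ else d

variable {s}

theorem mLoad_reassignOn_of_notMem (τ : Fin n → Fin #s) {i : Fin m} (hi : i ∉ s) :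
    mLoad p (reassignOn σ s τ) i = mLoad p σ i := by
  refine congrArg (∑ j ∈ ·, p j) (filter_congr fun j _ => ?_)
  unfold reassignOn
  split_ifs with h
  · exact iff_of_false (fun he => hi (he ▸ Subtype.prop _)) (fun he => hi (he ▸ h))
  · rfl

theorem mLoad_reassignOn_of_mem (τ : Fin n → Fin #s) {i : Fin m} (hi : i ∈ s) :
    mLoad p (reassignOn σ s τ) i =
      ∑ j ∈ (univ.filter fun j => σ j ∈ s).filter (fun j => τ j = s.equivFin ⟨i, hi⟩),
        p j := by
  rw [mLoad, filter_filter]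
  refine congrArg (∑ j ∈ ·, p j) (filter_congr fun j _ => ?_)
  unfold reassignOn
  split_ifs with h
  · constructor
    · rintro rfl
      simp [h]
    · rintro he
      simp [he]
  · exact iff_of_false (fun he => h (he ▸ hi)) (fun he => h he.1)

theorem sum_restrictTo (d : Fin #s) (k : Fin #s) :
    ∑ j ∈ (univ.filter fun j => σ j ∈ s).filter (fun j => restrictTo σ s d j = k), p j =
      mLoad p σ (s.equivFin.symm k) := by
  rw [mLoad, filter_filter]
  refine congrArg (∑ j ∈ ·, p j) (filter_congr fun j _ => ?_)
  unfold restrictTo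
  constructor
  · rintro ⟨h, hk⟩
    rw [dif_pos h] at hk
    simp [← hk]
  · rintro hk
    simp [hk]

end Reassign

theorem stmt1_general (n m : ℕ) (p : Fin n → ℝ)
    (σ : Fin n → Fin m) (hσ : IsLexOpt p σ)
    (M' : Finset (Fin m)) (hM' : M'.Nonempty) :
    M'.sup' hM' (mLoad p σ) =
      optMakespanOn M'.card p (Finset.univ.filter (fun j => σ j ∈ M')) := by
  have : NeZero #M' := ⟨hM'.card_ne_zero⟩
  obtain ⟨i₀, hi₀, hL⟩ := exists_mem_eq_sup' hM' (mLoad p σ)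
  refine le_antisymm (le_ciInf fun τ => ?_) ?_
  · by_contra! hτ
    have hτk := fun k => (le_ciSup (Finite.bddAbove_range _) k).trans_lt hτ
    refine (hσ (reassignOn σ M' τ)).not_gt (toLex_sortedDesc_lt_of_lt_max hi₀
      (fun i hi => hL ▸ le_sup' _ hi) (fun i hi => ?_)
      fun i hi => mLoad_reassignOn_of_notMem p σ τ hi)
    rw [mLoad_reassignOn_of_mem p σ τ hi, ← hL]
    exact hτk _
  · refine (ciInf_le (Finite.bddBelow_range _) (restrictTo σ M' 0)).trans
      (ciSup_le fun k => ?_)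
    rw [sum_restrictTo]
    exact le_sup' _ (M'.equivFin.symm k).2

/-- The restriction of a LexOpt schedule to any nonempty subset `M'` of machines
is a minimum-makespan schedule of the jobs assigned to `M'` on `|M'|` machines. -/
theorem stmt1 (n m : ℕ) (p : Fin n → ℝ) (hp : ∀ j, 0 < p j)
    (σ : Fin n → Fin m) (hσ : IsLexOpt p σ)
    (M' : Finset (Fin m)) (hM' : M'.Nonempty) :
    M'.sup' hM' (mLoad p σ) =
      optMakespanOn M'.card p (Finset.univ.filter (fun j => σ j ∈ M')) :=
  stmt1_general n m p σ hσ M' hM'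
end

section
/- For every set J of jobs with positive processing times and every integer m ≥ 2, the minimum makespan on m−1 machines is at most twice the minimum makespan on m machines: C*_max(m−1, J) ≤ 2·C*_max(m, J). -/
open Finset

lemma mLoad_nonneg {n m : ℕ} (p : Fin n → ℝ) (hp : ∀ j, 0 < p j)
    (σ : Fin n → Fin m) (i : Fin m) : 0 ≤ mLoad p σ i :=
  Finset.sum_nonneg fun j _ => (hp j).le

lemma mLoad_le_makespan {n m : ℕ} (p : Fin n → ℝ) (σ : Fin n → Fin m) (i : Fin m) :
    mLoad p σ i ≤ makespan p σ :=
  le_ciSup (Set.Finite.bddAbove (Set.finite_range _)) i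

lemma makespan_nonneg {n m : ℕ} [Nonempty (Fin m)] (p : Fin n → ℝ) (hp : ∀ j, 0 < p j)
    (σ : Fin n → Fin m) : 0 ≤ makespan p σ := by
  obtain ⟨i⟩ := (inferInstance : Nonempty (Fin m))
  exact le_trans (mLoad_nonneg p hp σ i) (mLoad_le_makespan p σ i)

/-- The minimum makespan on `m - 1` machines is at most twice the minimum
makespan on `m` machines. -/
theorem stmt2 (n m : ℕ) (hm : 2 ≤ m) (p : Fin n → ℝ) (hp : ∀ j, 0 < p j) :
    optMakespan (m - 1) p ≤ 2 * optMakespan m p := by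
  haveI h1 : Nonempty (Fin (m - 1)) := ⟨⟨0, by omega⟩⟩
  haveI h2 : Nonempty (Fin m) := ⟨⟨0, by omega⟩⟩
  set g : Fin m → Fin (m - 1) := fun k =>
    ⟨min k.val (m - 2), by have := min_le_right k.val (m - 2); omega⟩ with hg
  have key : ∀ σ : Fin n → Fin m, makespan p (g ∘ σ) ≤ 2 * makespan p σ := by
    intro σ
    apply ciSup_le
    intro i
    set a : Fin m := ⟨i.val, by have := i.2; omega⟩ with ha
    set b : Fin m := ⟨m - 1, by omega⟩ with hb
    have hia : i.val ≤ m - 2 := by have := i.2; omega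
    have hab : a ≠ b := by
      intro h
      have : a.val = b.val := by rw [h]
      simp [ha, hb] at this
      omega
    have hsubset : Finset.univ.filter (fun j => (g ∘ σ) j = i) ⊆
        Finset.univ.filter (fun j => σ j = a) ∪ Finset.univ.filter (fun j => σ j = b) := by
      intro j hj
      simp only [Finset.mem_filter, Finset.mem_univ, true_and, Function.comp] at hj
      have hval : min (σ j).val (m - 2) = i.val := congrArg Fin.val hj
      simp only [Finset.mem_union, Finset.mem_filter, Finset.mem_univ, true_and]
      by_cases hc : (σ j).val ≤ m - 2
      · left
        apply Fin.ext
        simp [ha]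
        omega
      · right
        apply Fin.ext
        have := (σ j).2
        simp [hb]
        omega
    have hdisj : Disjoint (Finset.univ.filter (fun j => σ j = a))
        (Finset.univ.filter (fun j => σ j = b)) := by
      rw [Finset.disjoint_filter]
      intro x _ h1' h2'
      exact hab (h1'.symm.trans h2')
    calc mLoad p (g ∘ σ) i
        ≤ ∑ j ∈ Finset.univ.filter (fun j => σ j = a) ∪
            Finset.univ.filter (fun j => σ j = b), p j :=
          Finset.sum_le_sum_of_subset_of_nonneg hsubset (fun j _ _ => (hp j).le)
      _ = mLoad p σ a + mLoad p σ b := Finset.sum_union hdisj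
      _ ≤ makespan p σ + makespan p σ :=
          add_le_add (mLoad_le_makespan p σ a) (mLoad_le_makespan p σ b)
      _ = 2 * makespan p σ := by ring
  have hbdd : BddBelow (Set.range fun σ : Fin n → Fin (m - 1) => makespan p σ) := by
    refine ⟨0, ?_⟩
    rintro x ⟨σ, rfl⟩
    exact makespan_nonneg p hp σ
  have h3 : ∀ σ : Fin n → Fin m, optMakespan (m - 1) p ≤ 2 * makespan p σ := by
    intro σ
    exact le_trans (ciInf_le hbdd (g ∘ σ)) (key σ)
  have h4 : optMakespan (m - 1) p / 2 ≤ optMakespan m p := by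
    apply le_ciInf
    intro σ
    linarith [h3 σ]
  linarith
end

section
/- Let S be a minimum-makespan schedule of jobs with processing times p_1,…,p_n > 0 on m identical machines, let J_j be a job assigned by S to machine M_ℓ, and let p' be obtained from p by decreasing p_j to p_j − δ for some 0 < δ ≤ p_j. If machine M_ℓ attains the maximum completion time in the schedule with the same job-to-machine assignment evaluated under p', then that schedule is a minimum-makespan schedule for the perturbed instance; in particular C*_max(m, p') = C_max(S) − δ. -/
open Finset

lemma mLoad_update {n m : ℕ} (p : Fin n → ℝ) (j : Fin n) (c : ℝ)
    (τ : Fin n → Fin m) (i : Fin m) :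
    mLoad (Function.update p j c) τ i
      = mLoad p τ i + (if τ j = i then c - p j else 0) := by
  unfold mLoad
  by_cases h : τ j = i
  · have hmem : j ∈ Finset.univ.filter (fun k => τ k = i) := by simp [h]
    rw [Finset.sum_update_of_mem hmem, if_pos h, ← Finset.erase_eq,
      ← Finset.add_sum_erase _ p hmem]
    ring
  · have hmem : j ∉ Finset.univ.filter (fun k => τ k = i) := by simp [h]
    rw [if_neg h, add_zero]
    refine Finset.sum_congr rfl fun k hk => ?_
    have : k ≠ j := fun e => hmem (e ▸ hk)
    exact Function.update_of_ne this _ _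

lemma le_makespan {n m : ℕ} (p : Fin n → ℝ) (τ : Fin n → Fin m) (i : Fin m) :
    mLoad p τ i ≤ makespan p τ :=
  le_ciSup (Set.Finite.bddAbove (Set.finite_range _)) i

/-- if, after reducing `p_j` by `δ` on a minimum-makespan schedule, the machine
of `J_j` still attains the maximum completion time, the kept-assignment schedule is optimal
for the perturbed instance, and `C*_max(m, p') = C_max(S) - δ`. -/
theorem stmt7 (n m : ℕ) (hm : 0 < m) (p : Fin n → ℝ) (hp : ∀ j, 0 < p j)
    (σ : Fin n → Fin m) (hσ : makespan p σ = optMakespan m p)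
    (j : Fin n) (δ : ℝ) (hδ1 : 0 < δ) (hδ2 : δ ≤ p j)
    (p' : Fin n → ℝ) (hp' : p' = Function.update p j (p j - δ))
    (hcrit : mLoad p' σ (σ j) = makespan p' σ) :
    makespan p' σ = optMakespan m p' ∧ optMakespan m p' = makespan p σ - δ := by
  haveI : Nonempty (Fin m) := ⟨⟨0, hm⟩⟩
  have hload : ∀ (τ : Fin n → Fin m) (i : Fin m),
      mLoad p' τ i = mLoad p τ i - (if τ j = i then δ else 0) := by
    intro τ i
    rw [hp', mLoad_update]
    by_cases h : τ j = i <;> simp [h] <;> ring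
  -- makespan p' τ ≥ makespan p τ - δ for all τ
  have hge : ∀ τ : Fin n → Fin m, makespan p τ - δ ≤ makespan p' τ := by
    intro τ
    rw [sub_le_iff_le_add]
    refine ciSup_le fun i => ?_
    have := le_makespan p' τ i
    rw [hload] at this
    have h2 : mLoad p τ i ≤ makespan p' τ + (if τ j = i then δ else 0) := by
      linarith
    refine h2.trans ?_
    by_cases h : τ j = i <;> simp [h, le_of_lt hδ1]
  -- makespan p' σ = makespan p σ - δ
  have heq : makespan p' σ = makespan p σ - δ := by
    have h1 : makespan p' σ = mLoad p σ (σ j) - δ := by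
      rw [← hcrit, hload]; simp
    have h2 : mLoad p σ (σ j) ≤ makespan p σ := le_makespan p σ (σ j)
    have h3 := hge σ
    linarith
  -- σ is optimal for p: makespan p σ ≤ makespan p τ
  have hopt : ∀ τ : Fin n → Fin m, makespan p σ ≤ makespan p τ := by
    intro τ
    rw [hσ]
    refine ciInf_le ⟨0, ?_⟩ τ
    rintro x ⟨ρ, rfl⟩
    refine le_trans ?_ (le_makespan p ρ (Classical.arbitrary (Fin m)))
    exact Finset.sum_nonneg fun k _ => (hp k).le
  have key : ∀ τ : Fin n → Fin m, makespan p' σ ≤ makespan p' τ := by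
    intro τ
    rw [heq]
    exact le_trans (by linarith [hopt τ]) (hge τ)
  have hopteq : optMakespan m p' = makespan p' σ := by
    refine le_antisymm ?_ (le_ciInf key)
    exact ciInf_le ⟨makespan p' σ, by rintro x ⟨ρ, rfl⟩; exact key ρ⟩ σ
  exact ⟨hopteq.symm, by rw [hopteq, heq]⟩
end

section
/- Let S be a minimum-makespan schedule of jobs with processing times p_1,…,p_n > 0 on m identical machines, and let p̂ be obtained from p by increasing the processing time of one job J_j to p_j + δ for some δ > 0, leaving all other processing times unchanged. Then the schedule that uses exactly the same job-to-machine assignment as S has makespan, measured with processing times p̂, at most 2·C*_max(m, p̂). -/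
open Finset

/-- keeping the assignment of a minimum-makespan schedule after one processing
time augmentation `p_j ← p_j + δ` yields makespan at most `2·C*_max(m, p̂)`. -/
theorem stmt9 (n m : ℕ) (hm : 0 < m) (p : Fin n → ℝ) (hp : ∀ j, 0 < p j)
    (σ : Fin n → Fin m) (hσ : makespan p σ = optMakespan m p)
    (j : Fin n) (δ : ℝ) (hδ : 0 < δ) :
    makespan (Function.update p j (p j + δ)) σ ≤
      2 * optMakespan m (Function.update p j (p j + δ)) := by
  have hmne : Nonempty (Fin m) := ⟨⟨0, hm⟩⟩
  set q := Function.update p j (p j + δ) with hq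
  have hpq : ∀ k, p k ≤ q k := by
    intro k
    by_cases hk : k = j
    · subst hk; simp [hq, Function.update_self]; linarith
    · simp [hq, Function.update_of_ne hk]
  have hqp : ∀ k, q k ≤ p k + δ := by
    intro k
    by_cases hk : k = j
    · subst hk; simp [hq, Function.update_self]
    · simp [hq, Function.update_of_ne hk]; linarith [(hp k).le]
  have hq0 : ∀ k, 0 < q k := fun k => lt_of_lt_of_le (hp k) (hpq k)
  -- basic bddAbove/bddBelow facts
  have bdd_load : ∀ (r : Fin n → ℝ) (τ : Fin n → Fin m),
      BddAbove (Set.range (mLoad r τ)) := fun r τ => Set.finite_range _ |>.bddAbove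
  have bdd_mk : ∀ (r : Fin n → ℝ),
      BddBelow (Set.range (fun τ : Fin n → Fin m => makespan r τ)) :=
    fun r => Set.finite_range _ |>.bddBelow
  -- makespan under q of any τ dominates makespan under p
  have mk_mono : ∀ τ : Fin n → Fin m, makespan p τ ≤ makespan q τ := by
    intro τ
    apply ciSup_le
    intro i
    refine le_trans ?_ (le_ciSup (bdd_load q τ) i)
    exact Finset.sum_le_sum fun k _ => hpq k
  -- opt p ≤ opt q
  have opt_mono : optMakespan m p ≤ optMakespan m q := by
    apply le_ciInf
    intro τ
    exact le_trans (ciInf_le (bdd_mk p) τ) (mk_mono τ)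
  -- δ ≤ opt q
  have hδopt : δ ≤ optMakespan m q := by
    apply le_ciInf
    intro τ
    have h1 : q j ≤ mLoad q τ (τ j) := by
      apply Finset.single_le_sum (fun k _ => (hq0 k).le)
      simp
    have h2 : δ ≤ q j := by simp [hq, Function.update_self]; linarith [(hp j).le]
    exact le_trans (le_trans h2 h1) (le_ciSup (bdd_load q τ) (τ j))
  -- makespan q σ ≤ makespan p σ + δ
  have key : makespan q σ ≤ makespan p σ + δ := by
    apply ciSup_le
    intro i
    have h1 : mLoad q σ i ≤ mLoad p σ i + δ := by
      have : mLoad q σ i = mLoad p σ i + (if σ j = i then δ else 0) := by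
        unfold mLoad
        by_cases hji : σ j = i
        · simp only [hji, if_true]
          have hjmem : j ∈ Finset.univ.filter (fun k => σ k = i) := by simp [hji]
          rw [← Finset.add_sum_erase _ q hjmem, ← Finset.add_sum_erase _ p hjmem]
          have : ∑ k ∈ (Finset.univ.filter (fun k => σ k = i)).erase j, q k
              = ∑ k ∈ (Finset.univ.filter (fun k => σ k = i)).erase j, p k := by
            apply Finset.sum_congr rfl
            intro k hk
            have : k ≠ j := Finset.ne_of_mem_erase hk
            simp [hq, Function.update_of_ne this]
          rw [this]
          simp [hq, Function.update_self]; ring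
        · simp only [hji, if_false, add_zero]
          apply Finset.sum_congr rfl
          intro k hk
          have hkj : k ≠ j := by
            rintro rfl
            exact hji (Finset.mem_filter.mp hk).2
          simp [hq, Function.update_of_ne hkj]
      rw [this]
      split <;> simp [hδ.le]
    refine le_trans h1 ?_
    have : mLoad p σ i ≤ makespan p σ := le_ciSup (bdd_load p σ) i
    linarith
  calc makespan q σ ≤ makespan p σ + δ := key
    _ = optMakespan m p + δ := by rw [hσ]
    _ ≤ optMakespan m q + optMakespan m q := add_le_add opt_mono hδopt
    _ = 2 * optMakespan m q := by ring
end

section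
/- For all integers m ≥ 2 and k with 1 ≤ k ≤ m−2 and every real f ≥ 1 there exist a makespan instance on m machines, a LexOpt schedule S for it, and a perturbed processing-time vector p̂ with p̂_j ≤ p_j for all j in which at most k jobs are reduced by a factor exceeding f, such that the kept-assignment schedule under p̂ has makespan exactly m·f/(m−k−1+f) times the minimum makespan of the perturbed instance. Concretely: the instance has (m−k)·m jobs of processing time f and k jobs of processing time m·f; S places m jobs of length f on each of the first m−k machines and one job of length m·f on each remaining machine; the perturbation reduces each length-f job on machines M_2,…,M_{m−k} to length 1 and cancels all jobs on the last k machines, so that the kept-assignment makespan is m·f while C*_max of the perturbed instance is f + (m−k−1). -/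
open Finset

private lemma aux_filter_div {m M c : ℕ} (hm : 0 < m) (hc : c < M) :
    (Finset.range (M * m)).filter (fun j => j / m = c) = Finset.Ico (c * m) (c * m + m) := by
  ext j
  simp only [Finset.mem_filter, Finset.mem_range, Finset.mem_Ico]
  constructor
  · rintro ⟨hj, rfl⟩
    have h1 := Nat.div_add_mod j m
    have h2 := Nat.mod_lt j hm
    have h3 : j / m * m = m * (j / m) := Nat.mul_comm _ _
    omega
  · rintro ⟨h1, h2⟩
    have hd : j / m = c := Nat.div_eq_of_lt_le h1 (by rw [add_mul, one_mul]; omega)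
    have h3 : (c + 1) * m ≤ M * m := Nat.mul_le_mul_right m hc
    have h4 : (c + 1) * m = c * m + m := by ring
    exact ⟨by omega, hd⟩

private lemma aux_blocksum (v : ℕ → ℝ) {m : ℕ} (hm : 0 < m) {i : ℕ} (hi : i < m) (M : ℕ) :
    ∑ j ∈ Finset.range (M * m), (if j % m = i then v j else 0)
      = ∑ t ∈ Finset.range M, v (t * m + i) := by
  induction M with
  | zero => simp
  | succ M ih =>
    have h1 : (M + 1) * m = M * m + m := by ring
    rw [Finset.sum_range_succ, ← ih, h1, Finset.range_eq_Ico,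
      ← Finset.sum_Ico_consecutive _ (Nat.zero_le (M * m)) (Nat.le_add_right _ m),
      ← Finset.range_eq_Ico]
    congr 1
    rw [Finset.sum_Ico_eq_sum_range]
    have h2 : M * m + m - M * m = m := by omega
    rw [h2]
    have h3 : ∀ r ∈ Finset.range m,
        (if (M * m + r) % m = i then v (M * m + r) else 0)
          = (if r = i then v (M * m + r) else 0) := by
      intro r hr
      rw [Finset.mem_range] at hr
      have : (M * m + r) % m = r := by
        rw [Nat.add_comm, Nat.add_mul_mod_self_right]
        exact Nat.mod_eq_of_lt hr
      rw [this]
    rw [Finset.sum_congr rfl h3, Finset.sum_ite_eq' (Finset.range m) i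
      (fun r => v (M * m + r)), if_pos (Finset.mem_range.mpr hi)]

private lemma aux_mload {n m : ℕ} (q : Fin n → ℝ) (w : ℕ → ℝ) (hq : ∀ j : Fin n, q j = w j)
    (τ : Fin n → Fin m) (e : ℕ → ℕ) (hτ : ∀ j : Fin n, (τ j : ℕ) = e j) (i : Fin m) :
    mLoad q τ i = ∑ t ∈ Finset.range n, (if e t = (i : ℕ) then w t else 0) := by
  rw [mLoad, Finset.sum_filter, ← Fin.sum_univ_eq_sum_range]
  refine Finset.sum_congr rfl fun j _ => ?_
  rw [hq j]
  exact if_congr (by rw [← Fin.val_inj, hτ j]) rfl rfl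

/-- tightness of the Type-1 guarantee. The instance with `(m-k)·m` jobs of
length `f` and `k` jobs of length `m·f`, LexOpt schedule putting `m` length-`f` jobs on each
of the first `m-k` machines and one big job on each remaining machine, perturbed by reducing
the length-`f` jobs on machines `M₂,…,M_{m-k}` to `1` and cancelling the jobs on the last `k`
machines, has kept-assignment makespan `m·f` while the perturbed optimum is `f + (m-k-1)`. -/
theorem stmt14 (m k : ℕ) (hk1 : 1 ≤ k) (hk2 : k + 2 ≤ m) (f : ℝ) (hf : 1 ≤ f)
    (p phat : Fin ((m - k) * m + k) → ℝ)
    (hp : ∀ j, p j = if (j : ℕ) < (m - k) * m then f else m * f)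
    (hphat : ∀ j, phat j =
      if (j : ℕ) < m then f else if (j : ℕ) < (m - k) * m then 1 else 0)
    (σ : Fin ((m - k) * m + k) → Fin m)
    (hσ : ∀ j, (σ j : ℕ) =
      if (j : ℕ) < (m - k) * m then (j : ℕ) / m else (m - k) + ((j : ℕ) - (m - k) * m)) :
    IsLexOpt p σ ∧
      (∀ j, phat j ≤ p j) ∧
      (Finset.univ.filter (fun j => phat j < p j / f)).card ≤ k ∧
      makespan phat σ = m * f ∧
      optMakespan m phat = f + ((m : ℝ) - k - 1) ∧
      makespan phat σ = ((m * f) / ((m : ℝ) - k - 1 + f)) * optMakespan m phat := by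
  have hm0 : 0 < m := by omega
  haveI : Nonempty (Fin m) := ⟨⟨0, hm0⟩⟩
  have hf0 : (0 : ℝ) < f := lt_of_lt_of_le one_pos hf
  have hMm : m ≤ (m - k) * m := by
    calc m = 1 * m := (one_mul m).symm
    _ ≤ (m - k) * m := Nat.mul_le_mul_right m (by omega)
  have hmR : (0 : ℝ) < (m : ℝ) := by exact_mod_cast hm0
  -- the split of a fiber sum
  have hsplit : ∀ (w : ℕ → ℝ) (c : ℕ),
      (∑ t ∈ Finset.range ((m - k) * m + k),
        (if (if t < (m - k) * m then t / m else (m - k) + (t - (m - k) * m)) = c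
          then w t else 0))
      = (∑ t ∈ Finset.range ((m - k) * m), (if t / m = c then w t else 0))
        + ∑ t ∈ Finset.Ico ((m - k) * m) ((m - k) * m + k),
            (if (m - k) + (t - (m - k) * m) = c then w t else 0) := by
    intro w c
    rw [Finset.range_eq_Ico,
      ← Finset.sum_Ico_consecutive _ (Nat.zero_le ((m - k) * m)) (Nat.le_add_right _ k),
      ← Finset.range_eq_Ico]
    congr 1
    · refine Finset.sum_congr rfl fun t ht => ?_
      rw [if_pos (Finset.mem_range.mp ht)]
    · refine Finset.sum_congr rfl fun t ht => ?_
      have h0 : (if t < (m - k) * m then t / m else (m - k) + (t - (m - k) * m))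
          = (m - k) + (t - (m - k) * m) :=
        if_neg (by have := (Finset.mem_Ico.mp ht).1; omega)
      rw [h0]
  -- first-chunk sum for c < m - k
  have hchunk1 : ∀ (w : ℕ → ℝ) (c : ℕ), c < m - k →
      (∑ t ∈ Finset.range ((m - k) * m), (if t / m = c then w t else 0))
        = ∑ t ∈ Finset.Ico (c * m) (c * m + m), w t := by
    intro w c hc
    rw [← Finset.sum_filter, aux_filter_div hm0 hc]
  -- first-chunk sum is zero for c ≥ m - k
  have hchunk1' : ∀ (w : ℕ → ℝ) (c : ℕ), m - k ≤ c →
      (∑ t ∈ Finset.range ((m - k) * m), (if t / m = c then w t else 0)) = 0 := by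
    intro w c hc
    refine Finset.sum_eq_zero fun t ht => ?_
    rw [Finset.mem_range] at ht
    have : t / m < m - k := Nat.div_lt_of_lt_mul (by rwa [mul_comm] at ht)
    rw [if_neg (by omega)]
  -- second-chunk sum for c < m - k is zero
  have hchunk2 : ∀ (w : ℕ → ℝ) (c : ℕ), c < m - k →
      (∑ t ∈ Finset.Ico ((m - k) * m) ((m - k) * m + k),
        (if (m - k) + (t - (m - k) * m) = c then w t else 0)) = 0 := by
    intro w c hc
    refine Finset.sum_eq_zero fun t ht => ?_
    rw [Finset.mem_Ico] at ht
    rw [if_neg (by omega)]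
  -- second-chunk sum for m - k ≤ c < m
  have hchunk2' : ∀ (w : ℕ → ℝ) (c : ℕ), m - k ≤ c → c < m →
      (∑ t ∈ Finset.Ico ((m - k) * m) ((m - k) * m + k),
        (if (m - k) + (t - (m - k) * m) = c then w t else 0))
      = w ((m - k) * m + (c - (m - k))) := by
    intro w c hc hcm
    have h1 : ∀ t ∈ Finset.Ico ((m - k) * m) ((m - k) * m + k),
        (if (m - k) + (t - (m - k) * m) = c then w t else 0)
          = (if t = (m - k) * m + (c - (m - k)) then w t else 0) := by
      intro t ht
      rw [Finset.mem_Ico] at ht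
      exact if_congr (by omega) rfl rfl
    rw [Finset.sum_congr rfl h1, Finset.sum_ite_eq' _ _ w,
      if_pos (Finset.mem_Ico.mpr ⟨by omega, by omega⟩)]
  -- loads of σ under p
  have hloadp : ∀ i : Fin m, mLoad p σ i = (m : ℝ) * f := by
    intro i
    rw [aux_mload p (fun t => if t < (m - k) * m then f else (m : ℝ) * f) hp σ
      (fun t => if t < (m - k) * m then t / m else (m - k) + (t - (m - k) * m)) hσ i, hsplit]
    by_cases hi : (i : ℕ) < m - k
    · rw [hchunk1 _ _ hi, hchunk2 _ _ hi, add_zero]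
      have h1 : ∀ t ∈ Finset.Ico ((i : ℕ) * m) ((i : ℕ) * m + m),
          (if t < (m - k) * m then f else (m : ℝ) * f) = f := by
        intro t ht
        rw [Finset.mem_Ico] at ht
        have h3 : ((i : ℕ) + 1) * m ≤ (m - k) * m := Nat.mul_le_mul_right m (by omega)
        have h4 : ((i : ℕ) + 1) * m = (i : ℕ) * m + m := by ring
        rw [if_pos (by omega)]
      rw [Finset.sum_congr rfl h1, Finset.sum_const, Nat.card_Ico]
      have : (i : ℕ) * m + m - (i : ℕ) * m = m := by omega
      rw [this, nsmul_eq_mul]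
    · rw [hchunk1' _ _ (by omega), hchunk2' _ _ (by omega) i.isLt, zero_add]
      have h6 : ¬ ((m - k) * m + ((i : ℕ) - (m - k)) < (m - k) * m) := by omega
      simp [h6]
  -- loads of σ under phat
  have hloadph : ∀ i : Fin m, mLoad phat σ i =
      if (i : ℕ) = 0 then (m : ℝ) * f else if (i : ℕ) < m - k then (m : ℝ) else 0 := by
    intro i
    rw [aux_mload phat
      (fun t => if t < m then f else if t < (m - k) * m then (1:ℝ) else 0) hphat σ
      (fun t => if t < (m - k) * m then t / m else (m - k) + (t - (m - k) * m)) hσ i, hsplit]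
    by_cases hi : (i : ℕ) < m - k
    · rw [hchunk1 _ _ hi, hchunk2 _ _ hi, add_zero]
      by_cases hi0 : (i : ℕ) = 0
      · rw [if_pos hi0, hi0]
        have h1 : ∀ t ∈ Finset.Ico (0 * m) (0 * m + m),
            (if t < m then f else if t < (m - k) * m then (1:ℝ) else 0) = f := by
          intro t ht
          rw [Finset.mem_Ico] at ht
          rw [if_pos (by omega)]
        rw [Finset.sum_congr rfl h1, Finset.sum_const, Nat.card_Ico]
        have : 0 * m + m - 0 * m = m := by omega
        rw [this, nsmul_eq_mul]
      · rw [if_neg hi0, if_pos hi]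
        have h1 : ∀ t ∈ Finset.Ico ((i : ℕ) * m) ((i : ℕ) * m + m),
            (if t < m then f else if t < (m - k) * m then (1:ℝ) else 0) = 1 := by
          intro t ht
          rw [Finset.mem_Ico] at ht
          have h3 : ((i : ℕ) + 1) * m ≤ (m - k) * m := Nat.mul_le_mul_right m (by omega)
          have h4 : ((i:ℕ)+1)*m = (i:ℕ)*m + m := by ring
          have h5 : 1 * m ≤ (i : ℕ) * m := Nat.mul_le_mul_right m (by omega)
          rw [if_neg (by omega), if_pos (by omega)]
        rw [Finset.sum_congr rfl h1, Finset.sum_const, Nat.card_Ico]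
        have : (i : ℕ) * m + m - (i : ℕ) * m = m := by omega
        rw [this, nsmul_eq_mul, mul_one]
    · rw [hchunk1' _ _ (by omega), hchunk2' _ _ (by omega) i.isLt, zero_add]
      have h5 : ¬ ((m - k) * m + ((i : ℕ) - (m - k)) < m) := by omega
      have h6 : ¬ ((m - k) * m + ((i : ℕ) - (m - k)) < (m - k) * m) := by omega
      have h7 : ¬ ((i : ℕ) = 0) := by omega
      have h8 : ¬ ((i : ℕ) < m - k) := by omega
      simp [h5, h6, h7, h8]
  -- total phat work
  have hcast : ((m - k - 1 : ℕ) : ℝ) = (m : ℝ) - k - 1 := by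
    have h1 : (m - k - 1 : ℕ) + (k + 1) = m := by omega
    have h2 := congrArg (Nat.cast : ℕ → ℝ) h1
    push_cast at h2
    linarith
  have hfib : ∑ i : Fin m, mLoad phat σ i = ∑ j, phat j := by
    simp only [mLoad]
    exact Finset.sum_fiberwise_of_maps_to (fun j _ => Finset.mem_univ _) phat
  have htot : ∑ j, phat j = (m : ℝ) * (f + ((m : ℝ) - k - 1)) := by
    rw [← hfib]
    calc ∑ i : Fin m, mLoad phat σ i
        = ∑ t ∈ Finset.range m,
          (if t = 0 then (m : ℝ) * f else if t < m - k then (m : ℝ) else 0) := by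
          rw [Finset.sum_congr rfl fun i _ => hloadph i]
          exact Fin.sum_univ_eq_sum_range
            (fun t => if t = 0 then (m : ℝ) * f else if t < m - k then (m : ℝ) else 0) m
      _ = (m : ℝ) * (f + ((m : ℝ) - k - 1)) := by
          rw [Finset.range_eq_Ico, ← Finset.sum_Ico_consecutive _ (Nat.zero_le (m - k))
            (by omega : m - k ≤ m),
            ← Finset.sum_Ico_consecutive _ (Nat.zero_le 1) (by omega : 1 ≤ m - k)]
          have e1 : ∑ t ∈ Finset.Ico 0 1,
              (if t = 0 then (m : ℝ) * f else if t < m - k then (m : ℝ) else 0)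
              = (m : ℝ) * f := by simp
          have e2 : ∑ t ∈ Finset.Ico 1 (m - k),
              (if t = 0 then (m : ℝ) * f else if t < m - k then (m : ℝ) else 0)
              = ((m - k - 1 : ℕ) : ℝ) * m := by
            have h2 : ∀ t ∈ Finset.Ico 1 (m - k),
                (if t = 0 then (m : ℝ) * f else if t < m - k then (m : ℝ) else 0)
                  = (m : ℝ) := by
              intro t ht
              rw [Finset.mem_Ico] at ht
              rw [if_neg (by omega), if_pos (by omega)]
            rw [Finset.sum_congr rfl h2, Finset.sum_const, Nat.card_Ico, nsmul_eq_mul]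
          have e3 : ∑ t ∈ Finset.Ico (m - k) m,
              (if t = 0 then (m : ℝ) * f else if t < m - k then (m : ℝ) else 0) = 0 := by
            refine Finset.sum_eq_zero fun t ht => ?_
            rw [Finset.mem_Ico] at ht
            rw [if_neg (by omega), if_neg (by omega)]
          rw [e1, e2, e3, hcast]
          ring
  -- makespan of σ under phat
  have hms : makespan phat σ = (m : ℝ) * f := by
    refine le_antisymm (ciSup_le fun i => ?_) ?_
    · rw [hloadph i]
      split_ifs
      · exact le_refl _
      · exact le_mul_of_one_le_right hmR.le hf
      · positivity
    · have h1 := le_ciSup (Set.Finite.bddAbove (Set.finite_range fun i => mLoad phat σ i))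
        (⟨0, hm0⟩ : Fin m)
      rw [hloadph ⟨0, hm0⟩, if_pos rfl] at h1
      exact h1
  -- lower bound on makespan of any schedule under phat
  have hlb : ∀ τ : Fin ((m - k) * m + k) → Fin m,
      f + ((m : ℝ) - k - 1) ≤ makespan phat τ := by
    intro τ
    have h1 : ∀ i : Fin m, mLoad phat τ i ≤ makespan phat τ := fun i =>
      le_ciSup (Set.Finite.bddAbove (Set.finite_range fun i => mLoad phat τ i)) i
    have h2 : ∑ i : Fin m, mLoad phat τ i = ∑ j, phat j := by
      simp only [mLoad]
      exact Finset.sum_fiberwise_of_maps_to (fun j _ => Finset.mem_univ _) phat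
    have h3 : (m : ℝ) * (f + ((m : ℝ) - k - 1)) ≤ (m : ℝ) * makespan phat τ := by
      calc (m : ℝ) * (f + ((m : ℝ) - k - 1)) = ∑ i : Fin m, mLoad phat τ i := by
            rw [h2, htot]
        _ ≤ ∑ _i : Fin m, makespan phat τ := Finset.sum_le_sum fun i _ => h1 i
        _ = (m : ℝ) * makespan phat τ := by
            rw [Finset.sum_const, Finset.card_univ, Fintype.card_fin, nsmul_eq_mul]
    exact le_of_mul_le_mul_left h3 hmR
  -- the balanced schedule τ₀
  have hτ0 : ∃ τ₀ : Fin ((m - k) * m + k) → Fin m,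
      makespan phat τ₀ = f + ((m : ℝ) - k - 1) := by
    refine ⟨fun j => if (j : ℕ) < (m - k) * m then ⟨(j : ℕ) % m, Nat.mod_lt _ hm0⟩
      else ⟨0, hm0⟩, ?_⟩
    have hτv : ∀ j : Fin ((m - k) * m + k),
        (((if (j : ℕ) < (m - k) * m then (⟨(j : ℕ) % m, Nat.mod_lt _ hm0⟩ : Fin m)
          else ⟨0, hm0⟩) : Fin m) : ℕ)
          = (fun t => if t < (m - k) * m then t % m else 0) (j : ℕ) := by
      intro j
      by_cases h : (j : ℕ) < (m - k) * m <;> simp [h]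
    have hload0 : ∀ i : Fin m,
        mLoad phat (fun j => if (j : ℕ) < (m - k) * m then
          (⟨(j : ℕ) % m, Nat.mod_lt _ hm0⟩ : Fin m) else ⟨0, hm0⟩) i
          = f + ((m : ℝ) - k - 1) := by
      intro i
      rw [aux_mload phat
        (fun t => if t < m then f else if t < (m - k) * m then (1:ℝ) else 0) hphat _
        (fun t => if t < (m - k) * m then t % m else 0) hτv i]
      rw [Finset.range_eq_Ico,
        ← Finset.sum_Ico_consecutive _ (Nat.zero_le ((m - k) * m)) (Nat.le_add_right _ k),
        ← Finset.range_eq_Ico]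
      have e2 : ∑ t ∈ Finset.Ico ((m - k) * m) ((m - k) * m + k),
          (if (if t < (m - k) * m then t % m else 0) = (i : ℕ)
            then (if t < m then f else if t < (m - k) * m then (1:ℝ) else 0) else 0)
          = 0 := by
        refine Finset.sum_eq_zero fun t ht => ?_
        rw [Finset.mem_Ico] at ht
        have h5 : ¬ t < m := by omega
        have h6 : ¬ t < (m - k) * m := by omega
        rw [if_neg h6, if_neg h5, if_neg h6]
        split <;> rfl
      have e1 : ∑ t ∈ Finset.range ((m - k) * m),
          (if (if t < (m - k) * m then t % m else 0) = (i : ℕ)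
            then (if t < m then f else if t < (m - k) * m then (1:ℝ) else 0) else 0)
          = f + ((m : ℝ) - k - 1) := by
        have h7 : ∀ t ∈ Finset.range ((m - k) * m),
            (if (if t < (m - k) * m then t % m else 0) = (i : ℕ)
              then (if t < m then f else if t < (m - k) * m then (1:ℝ) else 0) else 0)
            = (if t % m = (i : ℕ)
              then (if t < m then f else if t < (m - k) * m then (1:ℝ) else 0) else 0) := by
          intro t ht
          rw [Finset.mem_range] at ht
          rw [if_pos ht]
        rw [Finset.sum_congr rfl h7,
          aux_blocksum _ hm0 i.isLt (m - k), Finset.range_eq_Ico,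
          ← Finset.sum_Ico_consecutive _ (Nat.zero_le 1) (by omega : 1 ≤ m - k)]
        have e3 : ∑ t ∈ Finset.Ico 0 1,
            (if t * m + (i : ℕ) < m then f
              else if t * m + (i : ℕ) < (m - k) * m then (1:ℝ) else 0) = f := by
          have : (0 : ℕ) * m + (i : ℕ) < m := by
            have := i.isLt; omega
          simp [this]
        have e4 : ∑ t ∈ Finset.Ico 1 (m - k),
            (if t * m + (i : ℕ) < m then f
              else if t * m + (i : ℕ) < (m - k) * m then (1:ℝ) else 0)
            = ((m - k - 1 : ℕ) : ℝ) := by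
          have h8 : ∀ t ∈ Finset.Ico 1 (m - k),
              (if t * m + (i : ℕ) < m then f
                else if t * m + (i : ℕ) < (m - k) * m then (1:ℝ) else 0) = 1 := by
            intro t ht
            rw [Finset.mem_Ico] at ht
            have h9 : 1 * m ≤ t * m := Nat.mul_le_mul_right m ht.1
            have h10 : (t + 1) * m ≤ (m - k) * m := Nat.mul_le_mul_right m (by omega)
            have h11 : (t + 1) * m = t * m + m := by ring
            have := i.isLt
            rw [if_neg (by omega), if_pos (by omega)]
          rw [Finset.sum_congr rfl h8, Finset.sum_const, Nat.card_Ico, nsmul_eq_mul,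
            mul_one]
        rw [e3, e4, hcast]
      rw [e1, e2, add_zero]
    have : (fun i => mLoad phat (fun j => if (j : ℕ) < (m - k) * m then
        (⟨(j : ℕ) % m, Nat.mod_lt _ hm0⟩ : Fin m) else ⟨0, hm0⟩) i)
        = fun _ => f + ((m : ℝ) - k - 1) := funext hload0
    rw [makespan, this, ciSup_const]
  -- the optimum
  have hopt : optMakespan m phat = f + ((m : ℝ) - k - 1) := by
    obtain ⟨τ₀, hτ₀⟩ := hτ0
    refine le_antisymm ?_ (le_ciInf hlb)
    have h1 : BddBelow (Set.range fun τ : Fin ((m - k) * m + k) → Fin m =>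
        makespan phat τ) := ⟨f + ((m : ℝ) - k - 1), by rintro x ⟨τ, rfl⟩; exact hlb τ⟩
    calc optMakespan m phat ≤ makespan phat τ₀ := ciInf_le h1 τ₀
      _ = f + ((m : ℝ) - k - 1) := hτ₀
  -- LexOpt
  have hlex : IsLexOpt p σ := by
    intro σ'
    have hconst : sortedDesc (mLoad p σ) = fun _ => (m : ℝ) * f :=
      funext fun i => hloadp _
    set C := mLoad p σ' with hC
    set g := sortedDesc C with hg
    have hsumC : ∑ i, C i = (m : ℝ) * ((m : ℝ) * f) := by
      have h2 : ∑ i, C i = ∑ j, p j := by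
        simp only [hC, mLoad]
        exact Finset.sum_fiberwise_of_maps_to (fun j _ => Finset.mem_univ _) p
      have h3 : ∑ j, p j = ∑ i, mLoad p σ i := by
        simp only [mLoad]
        exact (Finset.sum_fiberwise_of_maps_to (fun j _ => Finset.mem_univ _) p).symm
      rw [h2, h3, Finset.sum_congr rfl fun i _ => hloadp i, Finset.sum_const,
        Finset.card_univ, Fintype.card_fin, nsmul_eq_mul]
    have hsumg : ∑ i, g i = (m : ℝ) * ((m : ℝ) * f) := by
      rw [← hsumC]
      exact Equiv.sum_comp (Fin.revPerm.trans (Tuple.sort C)) C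
    have hanti : Antitone g := by
      intro a b hab
      exact Tuple.monotone_sort C (Fin.rev_le_rev.mpr hab)
    rw [hconst]
    by_cases hall : ∀ i, g i = (m : ℝ) * f
    · exact le_of_eq (congrArg toLex (funext fun i => (hall i).symm))
    · push_neg at hall
      obtain ⟨i₁, hi₁⟩ := hall
      have hs : (Finset.univ.filter fun i => g i ≠ (m : ℝ) * f).Nonempty :=
        ⟨i₁, Finset.mem_filter.mpr ⟨Finset.mem_univ _, hi₁⟩⟩
      set i₀ := (Finset.univ.filter fun i => g i ≠ (m : ℝ) * f).min' hs with hi₀def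
      have hi₀ : g i₀ ≠ (m : ℝ) * f :=
        (Finset.mem_filter.mp (Finset.min'_mem _ hs)).2
      have hpre : ∀ j, j < i₀ → g j = (m : ℝ) * f := by
        intro j hj
        by_contra hne
        exact absurd (Finset.min'_le _ j (Finset.mem_filter.mpr ⟨Finset.mem_univ _, hne⟩))
          (not_le.mpr hj)
      have hlt : (m : ℝ) * f < g i₀ := by
        by_contra hnot
        have hlt' : g i₀ < (m : ℝ) * f := lt_of_le_of_ne (not_lt.mp hnot) hi₀
        have hle : ∀ j ∈ Finset.univ, g j ≤ (m : ℝ) * f := by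
          intro j _
          rcases lt_or_ge j i₀ with h | h
          · exact (hpre j h).le
          · exact (hanti h).trans hlt'.le
        have hstrict := Finset.sum_lt_sum hle ⟨i₀, Finset.mem_univ _, hlt'⟩
        rw [hsumg, Finset.sum_const, Finset.card_univ, Fintype.card_fin,
          nsmul_eq_mul] at hstrict
        exact lt_irrefl _ hstrict
      exact le_of_lt ⟨i₀, fun j hj => (hpre j hj).symm, hlt⟩
  -- domination
  have hdom : ∀ j, phat j ≤ p j := by
    intro j
    rw [hp j, hphat j]
    split_ifs <;> first
      | exact le_refl _
      | linarith [hmR]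
      | omega
      | positivity
  -- cardinality
  have hcard : (Finset.univ.filter fun j => phat j < p j / f).card ≤ k := by
    have hchar : ∀ j : Fin ((m - k) * m + k), phat j < p j / f → (m - k) * m ≤ (j : ℕ) := by
      intro j hj
      by_contra hlt'
      push_neg at hlt'
      have e1 : p j = f := by rw [hp j, if_pos hlt']
      by_cases h1 : (j : ℕ) < m
      · have e2 : phat j = f := by rw [hphat j, if_pos h1]
        rw [e1, e2, div_self (ne_of_gt hf0)] at hj
        linarith
      · have e2 : phat j = 1 := by rw [hphat j, if_neg h1, if_pos hlt']
        rw [e1, e2, div_self (ne_of_gt hf0)] at hj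
        linarith
    have hinj : Set.InjOn (fun j : Fin ((m - k) * m + k) =>
        (⟨(j : ℕ) - (m - k) * m, by have := j.isLt; omega⟩ : Fin k))
        (Finset.univ.filter fun j => phat j < p j / f) := by
      intro a ha b hb hab
      have ha' := hchar a (Finset.mem_filter.mp ha).2
      have hb' := hchar b (Finset.mem_filter.mp hb).2
      have := congrArg Fin.val hab
      simp only at this
      exact Fin.ext (by omega)
    calc (Finset.univ.filter fun j => phat j < p j / f).card
        ≤ (Finset.univ : Finset (Fin k)).card :=
          Finset.card_le_card_of_injOn _ (fun _ _ => Finset.mem_univ _) hinj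
      _ = k := by simp
  refine ⟨hlex, hdom, hcard, hms, hopt, ?_⟩
  rw [hms, hopt]
  have hd : (0 : ℝ) < (m : ℝ) - k - 1 + f := by
    have : (k : ℝ) + 2 ≤ m := by exact_mod_cast hk2
    linarith
  have he : f + ((m : ℝ) - k - 1) = (m : ℝ) - k - 1 + f := by ring
  rw [he, div_mul_cancel₀ _ (ne_of_gt hd)]
end

section
/- Let p_1 ≥ p_2 ≥ … ≥ p_n > 0 be processing times (set p_{n+1} = 0), let 0 ≤ ℓ ≤ n, and fix a partial assignment π of jobs J_1,…,J_ℓ to machines M_1,…,M_m with partial loads t_q = Σ_{j≤ℓ, π(j)=q} p_j. Let i ∈ {1,…,m} and let U_1,…,U_{i−1} be reals with U_q ≥ t_q for each q < i and Σ_{j=ℓ+1}^n p_j ≥ Σ_{q=1}^{i−1}(U_q − t_q). Let h be the smallest index in {ℓ,…,n} with Σ_{j=ℓ+1}^h p_j ≥ Σ_{q=1}^{i−1}(U_q − t_q), set λ = Σ_{j=h+1}^n p_j, τ = max_{i≤q≤m} t_q, and L_i = max{ min_{i≤q≤m} t_q + p_{h+1}, τ + max{ (λ − Σ_{q=i}^m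 (τ − t_q))/(m−i+1), 0 } }. Then every complete assignment σ of all n jobs with σ(j) = π(j) for j ≤ ℓ whose completion times satisfy C_1(σ) ≥ C_2(σ) ≥ … ≥ C_m(σ) and C_q(σ) ≤ U_q for all q ∈ {1,…,i−1} satisfies C_i(σ) ≥ L_i. -/
open Finset

/-- correctness of the vectorial lower bound component `L_i`
(Algorithm 1 / Lemma on vectorial lower bounds). -/
theorem stmt15 (n m ℓ : ℕ) (hℓ : ℓ ≤ n) (p : Fin n → ℝ)
    (hsort : Antitone p) (hp : ∀ j, 0 < p j)
    (π : Fin n → Fin m) (t : Fin m → ℝ)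
    (ht : ∀ q, t q = ∑ j ∈ Finset.univ.filter (fun j : Fin n => (j : ℕ) < ℓ ∧ π j = q), p j)
    (i : Fin m) (U : Fin m → ℝ) (hU : ∀ q, q < i → t q ≤ U q)
    (henough : ∑ j ∈ Finset.univ.filter (fun j : Fin n => ℓ ≤ (j : ℕ)), p j ≥
      ∑ q ∈ Finset.univ.filter (fun q : Fin m => q < i), (U q - t q))
    (h : ℕ) (hh1 : ℓ ≤ h) (hh2 : h ≤ n)
    (hh3 : ∑ j ∈ Finset.univ.filter (fun j : Fin n => ℓ ≤ (j : ℕ) ∧ (j : ℕ) < h), p j ≥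
      ∑ q ∈ Finset.univ.filter (fun q : Fin m => q < i), (U q - t q))
    (hh4 : ∀ h', ℓ ≤ h' → h' < h →
      ∑ j ∈ Finset.univ.filter (fun j : Fin n => ℓ ≤ (j : ℕ) ∧ (j : ℕ) < h'), p j <
        ∑ q ∈ Finset.univ.filter (fun q : Fin m => q < i), (U q - t q))
    (lam pNext τ L : ℝ)
    (hlam : lam = ∑ j ∈ Finset.univ.filter (fun j : Fin n => h ≤ (j : ℕ)), p j)
    (hpNext : pNext = if hx : h < n then p ⟨h, hx⟩ else 0)
    (hτ : τ = (Finset.univ.filter (fun q : Fin m => i ≤ q)).sup'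
      ⟨i, by simp⟩ t)
    (hL : L = max
      ((Finset.univ.filter (fun q : Fin m => i ≤ q)).inf' ⟨i, by simp⟩ t + pNext)
      (τ + max ((lam - ∑ q ∈ Finset.univ.filter (fun q : Fin m => i ≤ q), (τ - t q)) /
          ((m : ℝ) - (i : ℕ))) 0))
    (σ : Fin n → Fin m) (hext : ∀ j : Fin n, (j : ℕ) < ℓ → σ j = π j)
    (hanti : Antitone (mLoad p σ))
    (hCU : ∀ q, q < i → mLoad p σ q ≤ U q) :
    L ≤ mLoad p σ i := by
  classical
  set A : Finset (Fin n) := univ.filter (fun j : Fin n => ℓ ≤ (j : ℕ)) with hA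
  set Qlo : Finset (Fin m) := univ.filter (fun q : Fin m => q < i) with hQlo
  set Qhi : Finset (Fin m) := univ.filter (fun q : Fin m => i ≤ q) with hQhi
  have hne : Qhi.Nonempty := ⟨i, by simp [hQhi]⟩
  set S : Fin m → ℝ := fun q => ∑ j ∈ A.filter (fun j => σ j = q), p j with hS
  have hS0 : ∀ q, 0 ≤ S q := fun q => Finset.sum_nonneg fun j _ => (hp j).le
  have load_eq : ∀ q, mLoad p σ q = t q + S q := by
    intro q
    rw [mLoad, ht q,
      ← Finset.sum_filter_add_sum_filter_not (univ.filter (fun j => σ j = q))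
        (fun j => (j : ℕ) < ℓ)]
    congr 1
    · apply Finset.sum_congr _ (fun _ _ => rfl)
      ext j
      simp only [Finset.mem_filter, Finset.mem_univ, true_and]
      constructor
      · rintro ⟨hs, hl⟩; exact ⟨hl, (hext j hl) ▸ hs⟩
      · rintro ⟨hl, hp'⟩; exact ⟨(hext j hl).trans hp', hl⟩
    · apply Finset.sum_congr _ (fun _ _ => rfl)
      ext j
      simp only [hS, hA, Finset.mem_filter, Finset.mem_univ, true_and, not_lt, and_comm]
  have hSq_le : ∀ q ∈ Qlo, S q ≤ U q - t q := by
    intro q hq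
    have hq' : q < i := by simpa [hQlo] using hq
    have := hCU q hq'
    rw [load_eq q] at this
    linarith
  have hload_ge : ∀ q ∈ Qhi, mLoad p σ q ≤ mLoad p σ i := by
    intro q hq
    exact hanti (by simpa [hQhi] using hq)
  have ht_le : ∀ q, t q ≤ mLoad p σ q := by
    intro q; rw [load_eq q]; linarith [hS0 q]
  have hτle : τ ≤ mLoad p σ i := by
    rw [hτ]
    exact Finset.sup'_le _ _ fun q hq => le_trans (ht_le q) (hload_ge q hq)
  have fiber : ∀ Q : Finset (Fin m),
      ∑ q ∈ Q, S q = ∑ j ∈ A.filter (fun j => σ j ∈ Q), p j := fun Q =>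
    Finset.sum_fiberwise_eq_sum_filter A Q σ p
  have hfeq : A.filter (fun j => ¬ σ j ∈ Qlo) = A.filter (fun j => σ j ∈ Qhi) := by
    apply Finset.filter_congr
    intro j _
    simp [hQlo, hQhi, not_lt]
  have hsplit : ∑ q ∈ Qlo, S q + ∑ q ∈ Qhi, S q = ∑ j ∈ A, p j := by
    rw [fiber, fiber, ← hfeq, Finset.sum_filter_add_sum_filter_not]
  have hAsplit : ∑ j ∈ A, p j
      = ∑ j ∈ univ.filter (fun j : Fin n => ℓ ≤ (j : ℕ) ∧ (j : ℕ) < h), p j + lam := by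
    have e1 : A.filter (fun j : Fin n => (j : ℕ) < h)
        = univ.filter (fun j : Fin n => ℓ ≤ (j : ℕ) ∧ (j : ℕ) < h) := by
      rw [hA, Finset.filter_filter]
    have e2 : A.filter (fun j : Fin n => ¬ (j : ℕ) < h)
        = univ.filter (fun j : Fin n => h ≤ (j : ℕ)) := by
      rw [hA, Finset.filter_filter]
      apply Finset.filter_congr
      intro j _
      constructor
      · rintro ⟨_, h2⟩; omega
      · intro h2; omega
    rw [hlam, ← Finset.sum_filter_add_sum_filter_not A (fun j => (j : ℕ) < h), e1, e2]
  have hSloD : ∑ q ∈ Qlo, S q ≤ ∑ q ∈ Qlo, (U q - t q) := Finset.sum_le_sum hSq_le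
  have hShi : lam ≤ ∑ q ∈ Qhi, S q := by linarith [hh3, hsplit, hAsplit]
  have key2 : ∑ q ∈ Qhi, t q + lam ≤ ∑ q ∈ Qhi, mLoad p σ q := by
    have : ∑ q ∈ Qhi, mLoad p σ q = ∑ q ∈ Qhi, t q + ∑ q ∈ Qhi, S q := by
      rw [← Finset.sum_add_distrib]
      exact Finset.sum_congr rfl fun q _ => load_eq q
    linarith
  have hQhi_Ici : Qhi = Finset.Ici i := by
    ext q; simp [hQhi]
  have hcard : Qhi.card = m - (i : ℕ) := by rw [hQhi_Ici, Fin.card_Ici]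
  have hmi_eq : ((Qhi.card : ℕ) : ℝ) = (m : ℝ) - (i : ℕ) := by
    rw [hcard, Nat.cast_sub i.isLt.le]
  have hmi : (0 : ℝ) < (m : ℝ) - (i : ℕ) := by
    have := i.isLt
    have : ((i : ℕ) : ℝ) < (m : ℝ) := by exact_mod_cast this
    linarith
  have key3 : ∑ q ∈ Qhi, mLoad p σ q ≤ ((m : ℝ) - (i : ℕ)) * mLoad p σ i := by
    have := Finset.sum_le_card_nsmul Qhi (mLoad p σ) (mLoad p σ i) fun q hq => hload_ge q hq
    rwa [nsmul_eq_mul, hmi_eq] at this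
  have comp2 : τ + max ((lam - ∑ q ∈ Qhi, (τ - t q)) / ((m : ℝ) - (i : ℕ))) 0
      ≤ mLoad p σ i := by
    have hsum_t : ∑ q ∈ Qhi, (τ - t q) = ((m : ℝ) - (i : ℕ)) * τ - ∑ q ∈ Qhi, t q := by
      rw [Finset.sum_sub_distrib, Finset.sum_const, nsmul_eq_mul, hmi_eq]
    have hb : τ + (lam - ∑ q ∈ Qhi, (τ - t q)) / ((m : ℝ) - (i : ℕ)) ≤ mLoad p σ i := by
      rw [hsum_t]
      have hdiv : (lam - (((m : ℝ) - (i : ℕ)) * τ - ∑ q ∈ Qhi, t q)) / ((m : ℝ) - (i : ℕ))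
          ≤ mLoad p σ i - τ := by
        rw [div_le_iff₀ hmi]
        nlinarith [key2, key3]
      linarith
    have : τ + max ((lam - ∑ q ∈ Qhi, (τ - t q)) / ((m : ℝ) - (i : ℕ))) 0
        = max (τ + (lam - ∑ q ∈ Qhi, (τ - t q)) / ((m : ℝ) - (i : ℕ))) (τ + 0) :=
      (max_add_add_left _ _ _).symm
    rw [this]
    exact max_le hb (by simpa using hτle)
  have comp1 : Qhi.inf' hne t + pNext ≤ mLoad p σ i := by
    by_cases hx : h < n
    · rw [hpNext, dif_pos hx]
      have hex : ∃ j : Fin n, ℓ ≤ (j : ℕ) ∧ (j : ℕ) ≤ h ∧ i ≤ σ j := by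
        by_contra hcon
        push_neg at hcon
        set T : Finset (Fin n) :=
          univ.filter (fun j : Fin n => ℓ ≤ (j : ℕ) ∧ (j : ℕ) ≤ h) with hT
        have hTsub : T ⊆ A.filter (fun j => σ j ∈ Qlo) := by
          intro j hj
          simp only [hT, hA, Finset.mem_filter, Finset.mem_univ, true_and, hQlo] at hj ⊢
          exact ⟨hj.1, hcon j hj.1 hj.2⟩
        have hTle : ∑ j ∈ T, p j ≤ ∑ q ∈ Qlo, S q := by
          rw [fiber]
          exact Finset.sum_le_sum_of_subset_of_nonneg hTsub fun j _ _ => (hp j).le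
        have hTsplit : ∑ j ∈ T, p j
            = ∑ j ∈ univ.filter (fun j : Fin n => ℓ ≤ (j : ℕ) ∧ (j : ℕ) < h), p j
              + p ⟨h, hx⟩ := by
          have e3 : T.filter (fun j : Fin n => (j : ℕ) < h)
              = univ.filter (fun j : Fin n => ℓ ≤ (j : ℕ) ∧ (j : ℕ) < h) := by
            rw [hT, Finset.filter_filter]
            apply Finset.filter_congr
            intro j _
            constructor
            · rintro ⟨⟨h1, _⟩, h3⟩; exact ⟨h1, h3⟩
            · rintro ⟨h1, h3⟩; exact ⟨⟨h1, le_of_lt h3⟩, h3⟩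
          have e4 : T.filter (fun j : Fin n => ¬ (j : ℕ) < h) = ({⟨h, hx⟩} : Finset (Fin n)) := by
            ext j
            simp only [hT, Finset.mem_filter, Finset.mem_univ, true_and, not_lt,
              Finset.mem_singleton, Fin.ext_iff]
            omega
          rw [← Finset.sum_filter_add_sum_filter_not T (fun j => (j : ℕ) < h), e3, e4,
            Finset.sum_singleton]
        have := hp ⟨h, hx⟩
        linarith [hh3, hSloD, hTle, hTsplit]
      obtain ⟨j, hj1, hj2, hj3⟩ := hex
      have h1 : mLoad p σ (σ j) ≤ mLoad p σ i := hanti hj3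
      have h2 : t (σ j) + p j ≤ mLoad p σ (σ j) := by
        rw [load_eq]
        have hjA : j ∈ A.filter (fun k => σ k = σ j) := by
          simp [hA, hj1]
        have : p j ≤ S (σ j) :=
          Finset.single_le_sum (f := p) (fun k _ => (hp k).le) hjA
        linarith
      have h3 : Qhi.inf' hne t ≤ t (σ j) := Finset.inf'_le _ (by simp [hQhi, hj3])
      have h4 : p ⟨h, hx⟩ ≤ p j := hsort hj2
      linarith
    · rw [hpNext, dif_neg hx, add_zero]
      have h3 : Qhi.inf' hne t ≤ t i := Finset.inf'_le _ (by simp [hQhi])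
      linarith [ht_le i]
  rw [hL]
  exact max_le comp1 comp2
end

section
/- Let m ≥ 1, let p_1,…,p_n > 0 be processing times with total P = Σ_{j=1}^n p_j, and let T be a real with 0 < T < P. Then there exists a schedule of the jobs with processing times p_1,…,p_n on m machines with makespan at most T if and only if there exists a schedule on m machines of the n+m jobs consisting of p_1,…,p_n together with m additional dummy jobs each of processing time P, with makespan at most P + T. -/
open Finset

lemma makespan_le_iff {n m : ℕ} (hm : 1 ≤ m) (p : Fin n → ℝ) (σ : Fin n → Fin m) (T : ℝ) :
    makespan p σ ≤ T ↔ ∀ i, mLoad p σ i ≤ T := by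
  have : Nonempty (Fin m) := ⟨⟨0, hm⟩⟩
  constructor
  · intro h i
    exact le_trans (le_ciSup (Set.Finite.bddAbove (Set.finite_range _)) i) h
  · intro h
    exact ciSup_le h

lemma load_split {n m : ℕ} (p : Fin n → ℝ) (c : Fin m → ℝ) (τ : Fin (n+m) → Fin m) (i : Fin m) :
    mLoad (Fin.append p c) τ i =
      mLoad p (fun j => τ (Fin.castAdd m j)) i +
      ∑ k ∈ Finset.univ.filter (fun k => τ (Fin.natAdd n k) = i), c k := by
  unfold mLoad
  rw [Finset.sum_filter, Finset.sum_filter, Finset.sum_filter, Fin.sum_univ_add]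
  simp [Fin.append_left, Fin.append_right]

/-- correctness of the NP-hardness reduction: the jobs `p` fit on `m` machines
within makespan `T` iff the jobs `p` together with `m` dummy jobs of length `P = Σ p_j` fit
on `m` machines within makespan `P + T`. -/
theorem stmt18 (n m : ℕ) (hm : 1 ≤ m) (p : Fin n → ℝ) (hp : ∀ j, 0 < p j)
    (T : ℝ) (hT0 : 0 < T) (hT1 : T < ∑ j, p j) :
    (∃ σ : Fin n → Fin m, makespan p σ ≤ T) ↔
      (∃ σ' : Fin (n + m) → Fin m,
        makespan (Fin.append p (fun _ : Fin m => ∑ j, p j)) σ' ≤ (∑ j, p j) + T) := by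
  set P : ℝ := ∑ j, p j with hP
  have hP0 : 0 < P := lt_trans hT0 hT1
  have hnonneg : ∀ (σ : Fin n → Fin m) (i : Fin m), 0 ≤ mLoad p σ i := by
    intro σ i
    exact Finset.sum_nonneg (fun j _ => (hp j).le)
  constructor
  · rintro ⟨σ, hσ⟩
    refine ⟨Fin.addCases (fun j => σ j) (fun k => k), ?_⟩
    rw [makespan_le_iff hm]
    intro i
    rw [load_split]
    have h1 : mLoad p (fun j => Fin.addCases (motive := fun _ => Fin m)
        (fun j => σ j) (fun k => k) (Fin.castAdd m j)) i = mLoad p σ i := by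
      unfold mLoad; simp
    have h2 : ∑ k ∈ Finset.univ.filter (fun k => Fin.addCases (motive := fun _ => Fin m)
        (fun j => σ j) (fun k => k) (Fin.natAdd n k) = i), (fun _ : Fin m => P) k = P := by
      simp [Finset.filter_eq']
    rw [h1, h2]
    have := (makespan_le_iff hm p σ T).mp hσ i
    linarith
  · rintro ⟨σ', hσ'⟩
    have hload := (makespan_le_iff hm _ σ' _).mp hσ'
    set f : Fin m → Fin m := fun k => σ' (Fin.natAdd n k) with hf
    set D : Fin m → ℕ := fun i => (Finset.univ.filter (fun k => f k = i)).card with hD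
    have hsplit : ∀ i, mLoad (Fin.append p (fun _ : Fin m => P)) σ' i =
        mLoad p (fun j => σ' (Fin.castAdd m j)) i + (D i : ℝ) * P := by
      intro i
      rw [load_split]
      congr 1
      rw [Finset.sum_const, nsmul_eq_mul]
    have hDle : ∀ i, D i ≤ 1 := by
      intro i
      by_contra h
      push_neg at h
      have h2 : 2 ≤ D i := h
      have := hload i
      rw [hsplit i] at this
      have hn := hnonneg (fun j => σ' (Fin.castAdd m j)) i
      have : (D i : ℝ) * P ≤ P + T := by linarith
      have h2P : (2 : ℝ) * P ≤ (D i : ℝ) * P := by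
        apply mul_le_mul_of_nonneg_right _ hP0.le
        exact_mod_cast h2
      linarith
    have hsum : ∑ i : Fin m, D i = m := by
      have h := Finset.card_eq_sum_card_fiberwise (s := (Finset.univ : Finset (Fin m)))
        (t := Finset.univ) (f := f) (fun x _ => Finset.mem_univ _)
      simpa [hD] using h.symm
    have hDeq : ∀ i : Fin m, D i = 1 := by
      intro i
      have heq : ∑ i : Fin m, D i = ∑ _i : Fin m, 1 := by
        rw [hsum]; simp
      exact ((Finset.sum_eq_sum_iff_of_le (fun i _ => hDle i)).mp heq) i (Finset.mem_univ i)
    refine ⟨fun j => σ' (Fin.castAdd m j), ?_⟩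
    rw [makespan_le_iff hm]
    intro i
    have := hload i
    rw [hsplit i, hDeq i] at this
    push_cast at this
    linarith
end
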